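/- Let n ≥ 2, let Ω be an open subset of ℝⁿ, and let 0 < δ ≤ n. Then there exists a constant c₂ depending only on n such that ∫_Ω |f(x)| dx ≤ (c₂/δ) ( ∫_Ω |f(x)|^{δ/n} dH^δ_∞ )^{n/δ} for all Lebesgue measurable functions f : Ω → [−∞, ∞], where the left-hand side is a Lebesgue integral. -/

import Mathlib

open MeasureTheory Metric Set Bornology
open scoped ENNReal NNReal

/-- The `δ`-dimensional Hausdorff content of a set `E ⊆ ℝⁿ`, defined as the infimum of
`∑ᵢ rᵢ^δ` over all countable coverings of `E` by open balls `B(xᵢ, rᵢ)`. -/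
noncomputable def hContent (n : ℕ) (δ : ℝ) (E : Set (EuclideanSpace ℝ (Fin n))) : ℝ≥0∞ :=
  ⨅ (x : ℕ → EuclideanSpace ℝ (Fin n)) (r : ℕ → ℝ≥0)
    (_ : E ⊆ ⋃ i, Metric.ball (x i) (r i)), ∑' i, (r i : ℝ≥0∞) ^ δ

/-- The `δ`-dimensional Hausdorff measure of `E ⊆ ℝⁿ`, obtained from coverings by open balls of
radii at most `ρ`, in the limit `ρ → 0⁺` (equivalently: the supremum over `ρ > 0`, since the
infima increase as `ρ` decreases). -/
noncomputable def hMeasure (n : ℕ) (δ : ℝ) (E : Set (EuclideanSpace ℝ (Fin n))) : ℝ≥0∞ :=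
  ⨆ (ρ : ℝ≥0) (_ : 0 < ρ),
    ⨅ (x : ℕ → EuclideanSpace ℝ (Fin n)) (r : ℕ → ℝ≥0)
      (_ : E ⊆ ⋃ i, Metric.ball (x i) (r i)) (_ : ∀ i, r i ≤ ρ), ∑' i, (r i : ℝ≥0∞) ^ δ

/-- The Choquet integral `∫_Ω f dH^δ_∞ = ∫₀^∞ H^δ_∞({x ∈ Ω : f x > t}) dt` of a
(nonnegative) real-valued function with respect to the Hausdorff content. -/
noncomputable def choquet (n : ℕ) (δ : ℝ) (Ω : Set (EuclideanSpace ℝ (Fin n)))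
    (f : EuclideanSpace ℝ (Fin n) → ℝ) : ℝ≥0∞ :=
  ∫⁻ t in Set.Ioi (0 : ℝ), hContent n δ {x ∈ Ω | t < f x}

/-- The Choquet integral of an `[0,∞]`-valued function with respect to the Hausdorff content. -/
noncomputable def echoquet (n : ℕ) (δ : ℝ) (Ω : Set (EuclideanSpace ℝ (Fin n)))
    (f : EuclideanSpace ℝ (Fin n) → ℝ≥0∞) : ℝ≥0∞ :=
  ∫⁻ t in Set.Ioi (0 : ℝ), hContent n δ {x ∈ Ω | ENNReal.ofReal t < f x}

/-- The centered fractional Hardy–Littlewood maximal function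
`M_κ f (x) = sup_{r>0} r^{κ-n} ∫_{B(x,r)} |f|`. -/
noncomputable def fracMaximal (n : ℕ) (κ : ℝ) (f : EuclideanSpace ℝ (Fin n) → ℝ)
    (x : EuclideanSpace ℝ (Fin n)) : ℝ≥0∞ :=
  ⨆ (r : ℝ) (_ : 0 < r),
    ENNReal.ofReal (r ^ (κ - n)) * ∫⁻ y in Metric.ball x r, ENNReal.ofReal |f y|

/-- The Riesz potential of order `1`: `I₁ f (x) = ∫_{ℝⁿ} |f y| / |x-y|^{n-1} dy`. -/
noncomputable def rieszPot (n : ℕ) (f : EuclideanSpace ℝ (Fin n) → ℝ)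
    (x : EuclideanSpace ℝ (Fin n)) : ℝ≥0∞ :=
  ∫⁻ y, ENNReal.ofReal |f y| / edist x y ^ ((n : ℝ) - 1)

/-- `Ω` is an `(α, β)`-John domain with John center `x₀`: every `x ∈ Ω` can be joined to `x₀`
by a rectifiable curve `γ : [0, L] → Ω` parametrized by arclength (hence `1`-Lipschitz) with
`γ 0 = x`, `γ L = x₀`, `L ≤ β` and `dist (γ t, ∂Ω) ≥ (α/β) t`. -/
def IsJohnDomainWithCenter (n : ℕ) (α β : ℝ) (Ω : Set (EuclideanSpace ℝ (Fin n)))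
    (x₀ : EuclideanSpace ℝ (Fin n)) : Prop :=
  x₀ ∈ Ω ∧ ∀ x ∈ Ω, ∃ L : ℝ, 0 ≤ L ∧ L ≤ β ∧ ∃ γ : ℝ → EuclideanSpace ℝ (Fin n),
    γ 0 = x ∧ γ L = x₀ ∧ (∀ t ∈ Set.Icc 0 L, γ t ∈ Ω) ∧
    LipschitzOnWith 1 γ (Set.Icc 0 L) ∧
    ∀ t ∈ Set.Icc 0 L, α / β * t ≤ Metric.infDist (γ t) (frontier Ω)

/-- `Ω` is an `(α, β)`-John domain. -/
def IsJohnDomain (n : ℕ) (α β : ℝ) (Ω : Set (EuclideanSpace ℝ (Fin n))) : Prop :=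
  ∃ x₀, IsJohnDomainWithCenter n α β Ω x₀

/-!
With `ωₙ` the volume of the unit ball, a cover of `E` by balls `B(xᵢ, rᵢ)` gives
`|E| ≤ ωₙ ∑ rᵢⁿ ≤ ωₙ (∑ rᵢ^δ)^{n/δ}` because `n/δ ≥ 1`, so `|E| ≤ ωₙ (H^δ_∞(E))^{n/δ}`.
Apply this to the superlevel sets in the layer cake formula for `∫_Ω |f|`. With `p = n/δ` and the
decreasing function `H(u) = H^δ_∞{x ∈ Ω : |f(x)|^{1/p} > u}`, the substitution `t = u^p` leaves
`∫₀^∞ p u^{p-1} H(u)^p du`, and since `u H(u) ≤ ∫₀^∞ H =: A` this is at most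
`p A^{p-1} ∫₀^∞ H = p A^p`.
-/

namespace ENNReal

theorem rpow_eq_rpow_sub_one_mul (x : ℝ≥0∞) {p : ℝ} (hp : 1 ≤ p) : x ^ p = x ^ (p - 1) * x := by
  simpa using rpow_add_of_nonneg (x := x) (p - 1) 1 (by linarith) zero_le_one

theorem tsum_rpow_le_rpow_tsum {ι : Type*} (a : ι → ℝ≥0∞) {p : ℝ} (hp : 1 ≤ p) :
    ∑' i, a i ^ p ≤ (∑' i, a i) ^ p :=
  calc ∑' i, a i ^ p = ∑' i, a i ^ (p - 1) * a i := by
        simp_rw [rpow_eq_rpow_sub_one_mul _ hp]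
    _ ≤ ∑' i, (∑' j, a j) ^ (p - 1) * a i :=
        ENNReal.tsum_le_tsum fun i => by gcongr; exact ENNReal.le_tsum i
    _ = (∑' i, a i) ^ p := by rw [ENNReal.tsum_mul_left, ← rpow_eq_rpow_sub_one_mul _ hp]

end ENNReal

theorem EReal.measurable_abs : Measurable EReal.abs :=
  EReal.measurable_of_measurable_real <| by
    simpa only [EReal.abs_def] using continuous_abs.measurable.ennreal_ofReal

namespace MeasureTheory

theorem lintegral_eq_lintegral_meas_ofReal_lt {α : Type*} [MeasurableSpace α] (μ : Measure α)
    {f : α → ℝ≥0∞} (hf : Measurable f) :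
    ∫⁻ x, f x ∂μ = ∫⁻ t in Ioi 0, μ {x | ENNReal.ofReal t < f x} := by
  by_cases htop : μ {x | f x = ∞} = 0
  · have hfin : ∀ᵐ x ∂μ, f x ≠ ∞ := measure_eq_zero_iff_ae_notMem.1 htop
    rw [lintegral_congr_ae (hfin.mono fun x hx => (ENNReal.ofReal_toReal hx).symm),
      lintegral_eq_lintegral_meas_lt μ (ae_of_all _ fun _ => ENNReal.toReal_nonneg)
        hf.ennreal_toReal.aemeasurable]
    refine setLIntegral_congr_fun measurableSet_Ioi fun t ht => measure_congr ?_
    filter_upwards [hfin] with x hx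
    exact propext (ENNReal.ofReal_lt_iff_lt_toReal (le_of_lt ht) hx).symm
  · rw [lintegral_eq_top_of_measure_eq_top_ne_zero hf.aemeasurable htop, eq_comm, eq_top_iff]
    calc ∞ = ∫⁻ _ in Ioi (0 : ℝ), μ {x | f x = ∞} := by
          rw [setLIntegral_const, Real.volume_Ioi, ENNReal.mul_top htop]
      _ ≤ ∫⁻ t in Ioi 0, μ {x | ENNReal.ofReal t < f x} :=
          lintegral_mono fun t => measure_mono fun x (hx : f x = ∞) => by simp [hx]

theorem lintegral_comp_rpow_Ioi (g : ℝ → ℝ≥0∞) {p : ℝ} (hp : 0 < p) :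
    ∫⁻ x in Ioi 0, ENNReal.ofReal (p * x ^ (p - 1)) * g (x ^ p) = ∫⁻ y in Ioi 0, g y := by
  have himage : (· ^ p) '' Ioi 0 = Ioi (0 : ℝ) := by
    refine Subset.antisymm (image_subset_iff.2 fun x hx => Real.rpow_pos_of_pos hx p)
      fun y hy => ⟨y ^ p⁻¹, Real.rpow_pos_of_pos hy _, Real.rpow_inv_rpow (le_of_lt hy) hp.ne'⟩
  conv_rhs => rw [← himage]
  rw [lintegral_image_eq_lintegral_abs_deriv_mul measurableSet_Ioi
    (fun x hx => (Real.hasDerivAt_rpow_const (Or.inl (ne_of_gt hx))).hasDerivWithinAt)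
    ((Real.rpow_left_injOn hp.ne').mono (Ioi_subset_Ici_self (a := 0)))]
  refine setLIntegral_congr_fun measurableSet_Ioi fun x (hx : 0 < x) => ?_
  rw [abs_of_nonneg (mul_nonneg hp.le (Real.rpow_nonneg hx.le _))]

theorem ofReal_mul_le_setLIntegral_Ioi_of_antitone {H : ℝ → ℝ≥0∞} (hH : Antitone H) (u : ℝ) :
    ENNReal.ofReal u * H u ≤ ∫⁻ t in Ioi 0, H t :=
  calc ENNReal.ofReal u * H u = ∫⁻ _ in Ioc 0 u, H u := by
        rw [setLIntegral_const, Real.volume_Ioc, sub_zero, mul_comm]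
    _ ≤ ∫⁻ t in Ioc 0 u, H t := setLIntegral_mono' measurableSet_Ioc fun t ht => hH ht.2
    _ ≤ ∫⁻ t in Ioi 0, H t := lintegral_mono_set Ioc_subset_Ioi_self

theorem lintegral_rpow_comp_rpow_inv_le_of_antitone {H : ℝ → ℝ≥0∞} (hH : Antitone H) {p : ℝ}
    (hp : 1 ≤ p) :
    ∫⁻ t in Ioi 0, H (t ^ p⁻¹) ^ p ≤ ENNReal.ofReal p * (∫⁻ t in Ioi 0, H t) ^ p := by
  set A := ∫⁻ t in Ioi 0, H t
  have hp0 : 0 < p := by linarith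
  have hpointwise : ∀ u ∈ Ioi (0 : ℝ), ENNReal.ofReal (p * u ^ (p - 1)) * H ((u ^ p) ^ p⁻¹) ^ p
      ≤ ENNReal.ofReal p * A ^ (p - 1) * H u := by
    intro u (hu : 0 < u)
    rw [Real.rpow_rpow_inv hu.le hp0.ne', ENNReal.ofReal_mul hp0.le,
      ← ENNReal.ofReal_rpow_of_pos hu, ENNReal.rpow_eq_rpow_sub_one_mul (H u) hp, mul_assoc,
      ← mul_assoc (_ ^ _), ← ENNReal.mul_rpow_of_nonneg _ _ (by linarith), ← mul_assoc]
    gcongr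
    exact ofReal_mul_le_setLIntegral_Ioi_of_antitone hH u
  calc ∫⁻ t in Ioi 0, H (t ^ p⁻¹) ^ p
      = ∫⁻ u in Ioi 0, ENNReal.ofReal (p * u ^ (p - 1)) * H ((u ^ p) ^ p⁻¹) ^ p :=
        (lintegral_comp_rpow_Ioi (fun t => H (t ^ p⁻¹) ^ p) hp0).symm
    _ ≤ ∫⁻ u in Ioi 0, ENNReal.ofReal p * A ^ (p - 1) * H u :=
        setLIntegral_mono' measurableSet_Ioi hpointwise
    _ = ENNReal.ofReal p * A ^ p := by
        rw [lintegral_const_mul _ hH.measurable, mul_assoc, ← ENNReal.rpow_eq_rpow_sub_one_mul A hp]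

end MeasureTheory

section HausdorffContent

variable {n : ℕ} {δ : ℝ}

theorem hContent_mono {E F : Set (EuclideanSpace ℝ (Fin n))} (h : E ⊆ F) :
    hContent n δ E ≤ hContent n δ F :=
  le_iInf fun x => le_iInf fun r => le_iInf fun hF =>
    iInf_le_of_le x <| iInf_le_of_le r <| iInf_le_of_le (h.trans hF) le_rfl

theorem volume_le_mul_tsum_rpow_of_subset_iUnion_ball (hδ : 0 < δ) (hδn : δ ≤ n)
    {E : Set (EuclideanSpace ℝ (Fin n))} {x : ℕ → EuclideanSpace ℝ (Fin n)} {r : ℕ → ℝ≥0}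
    (hE : E ⊆ ⋃ i, ball (x i) (r i)) :
    volume E ≤ volume (ball (0 : EuclideanSpace ℝ (Fin n)) 1) *
      (∑' i, (r i : ℝ≥0∞) ^ δ) ^ ((n : ℝ) / δ) := by
  have : Nonempty (Fin n) := ⟨⟨0, by exact_mod_cast hδ.trans_le hδn⟩⟩
  calc volume E ≤ ∑' i, volume (ball (x i) (r i)) := (measure_mono hE).trans (measure_iUnion_le _)
    _ = volume (ball (0 : EuclideanSpace ℝ (Fin n)) 1) *
          ∑' i, ((r i : ℝ≥0∞) ^ δ) ^ ((n : ℝ) / δ) := by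
        rw [← ENNReal.tsum_mul_left]
        refine tsum_congr fun i => ?_
        rw [Measure.addHaar_ball _ _ (r i).coe_nonneg, finrank_euclideanSpace_fin, mul_comm,
          ← ENNReal.rpow_mul, mul_div_cancel₀ _ hδ.ne', ENNReal.rpow_natCast,
          ENNReal.ofReal_pow (r i).coe_nonneg, ENNReal.ofReal_coe_nnreal]
    _ ≤ _ := by gcongr; exact ENNReal.tsum_rpow_le_rpow_tsum _ ((one_le_div hδ).2 hδn)

theorem volume_le_mul_hContent_rpow (hδ : 0 < δ) (hδn : δ ≤ n)
    (E : Set (EuclideanSpace ℝ (Fin n))) :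
    volume E ≤ volume (ball (0 : EuclideanSpace ℝ (Fin n)) 1) * hContent n δ E ^ ((n : ℝ) / δ) := by
  have hp : 0 < (n : ℝ) / δ := div_pos (hδ.trans_le hδn) hδ
  have hV : volume (ball (0 : EuclideanSpace ℝ (Fin n)) 1) ≠ 0 :=
    (measure_ball_pos _ _ one_pos).ne'
  rw [← ENNReal.div_le_iff' hV measure_ball_lt_top.ne, ← ENNReal.rpow_inv_le_iff hp]
  refine le_iInf fun x => le_iInf fun r => le_iInf fun hE => ?_
  rw [ENNReal.rpow_inv_le_iff hp, ENNReal.div_le_iff' hV measure_ball_lt_top.ne]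
  exact volume_le_mul_tsum_rpow_of_subset_iUnion_ball hδ hδn hE

theorem lintegral_le_mul_echoquet_rpow (hδ : 0 < δ) (hδn : δ ≤ n)
    (Ω : Set (EuclideanSpace ℝ (Fin n))) {G : EuclideanSpace ℝ (Fin n) → ℝ≥0∞}
    (hG : Measurable G) :
    ∫⁻ x in Ω, G x ≤ volume (ball (0 : EuclideanSpace ℝ (Fin n)) 1) * ENNReal.ofReal (n / δ) *
      echoquet n δ Ω (fun x => G x ^ (δ / n)) ^ ((n : ℝ) / δ) := by
  set V := volume (ball (0 : EuclideanSpace ℝ (Fin n)) 1)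
  set p : ℝ := n / δ
  have hp : 1 ≤ p := (one_le_div hδ).2 hδn
  set H : ℝ → ℝ≥0∞ := fun t => hContent n δ {x ∈ Ω | ENNReal.ofReal t < G x ^ p⁻¹}
  have hH : Antitone H := fun s t hst =>
    hContent_mono fun x hx => ⟨hx.1, (ENNReal.ofReal_le_ofReal hst).trans_lt hx.2⟩
  have hlevel : ∀ t ∈ Ioi (0 : ℝ),
      volume.restrict Ω {x | ENNReal.ofReal t < G x} ≤ V * H (t ^ p⁻¹) ^ p := by
    intro t (ht : 0 < t)
    have hset : {x | ENNReal.ofReal t < G x} ∩ Ω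
        = {x ∈ Ω | ENNReal.ofReal (t ^ p⁻¹) < G x ^ p⁻¹} := by
      ext x
      rw [← ENNReal.ofReal_rpow_of_pos ht]
      simp only [mem_inter_iff, mem_ofPred_eq, ENNReal.rpow_lt_rpow_iff (by positivity : 0 < p⁻¹),
        and_comm]
    rw [Measure.restrict_apply (measurableSet_lt measurable_const hG), hset]
    exact volume_le_mul_hContent_rpow hδ hδn _
  calc ∫⁻ x in Ω, G x = ∫⁻ t in Ioi 0, volume.restrict Ω {x | ENNReal.ofReal t < G x} :=
        lintegral_eq_lintegral_meas_ofReal_lt _ hG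
    _ ≤ ∫⁻ t in Ioi 0, V * H (t ^ p⁻¹) ^ p := setLIntegral_mono' measurableSet_Ioi hlevel
    _ = V * ∫⁻ t in Ioi 0, H (t ^ p⁻¹) ^ p := lintegral_const_mul' _ _ measure_ball_lt_top.ne
    _ ≤ V * (ENNReal.ofReal p * (∫⁻ t in Ioi 0, H t) ^ p) := by
        gcongr
        exact lintegral_rpow_comp_rpow_inv_le_of_antitone hH hp
    _ = V * ENNReal.ofReal p * echoquet n δ Ω (fun x => G x ^ (δ / n)) ^ p := by
        rw [mul_assoc, ← inv_div]
        rfl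

end HausdorffContent

theorem lebesgue_le_choquet_power_general (n : ℕ) :
    ∃ c₂ : ℝ≥0, 0 < c₂ ∧
      ∀ δ : ℝ, 0 < δ → δ ≤ (n : ℝ) →
        ∀ Ω : Set (EuclideanSpace ℝ (Fin n)), IsOpen Ω →
          ∀ f : EuclideanSpace ℝ (Fin n) → EReal, Measurable f →
            ∫⁻ x in Ω, (f x).abs
              ≤ (c₂ : ℝ≥0∞) / ENNReal.ofReal δ *
                  (echoquet n δ Ω fun x => (f x).abs ^ (δ / n)) ^ ((n : ℝ) / δ) := by
  rcases Nat.eq_zero_or_pos n with rfl | hn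
  · exact ⟨1, one_pos, fun δ hδ hδn => absurd hδn (by simpa using hδ)⟩
  set V := volume (ball (0 : EuclideanSpace ℝ (Fin n)) 1)
  have hV : V ≠ ∞ := measure_ball_lt_top.ne
  have hc₂ : 0 < V.toNNReal * n :=
    mul_pos (ENNReal.toNNReal_pos (measure_ball_pos _ _ one_pos).ne' hV) (by exact_mod_cast hn)
  refine ⟨V.toNNReal * n, hc₂, fun δ hδ hδn Ω _ f hf => ?_⟩
  have hconst :
      ((V.toNNReal * n : ℝ≥0) : ℝ≥0∞) / ENNReal.ofReal δ = V * ENNReal.ofReal (n / δ) := by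
    rw [ENNReal.coe_mul, ENNReal.coe_toNNReal hV, ENNReal.ofReal_div_of_pos hδ,
      ENNReal.ofReal_natCast, mul_div_assoc, ENNReal.coe_natCast]
  rw [hconst]
  exact lintegral_le_mul_echoquet_rpow hδ hδn Ω (EReal.measurable_abs.comp hf)

/-- Lemma: the Lebesgue integral is dominated by a power of the Choquet
integral w.r.t. the `δ`-dimensional Hausdorff content. There is `c₂ = c₂(n) > 0` such that for
every `0 < δ ≤ n`, every open `Ω ⊆ ℝⁿ` and every measurable `f : Ω → [-∞, ∞]`,
`∫_Ω |f| dx ≤ (c₂/δ) (∫_Ω |f|^{δ/n} dH^δ_∞)^{n/δ}`. -/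
theorem lebesgue_le_choquet_power (n : ℕ) (hn : 2 ≤ n) :
    ∃ c₂ : ℝ≥0, 0 < c₂ ∧
      ∀ δ : ℝ, 0 < δ → δ ≤ (n : ℝ) →
        ∀ Ω : Set (EuclideanSpace ℝ (Fin n)), IsOpen Ω →
          ∀ f : EuclideanSpace ℝ (Fin n) → EReal, Measurable f →
            ∫⁻ x in Ω, (f x).abs
              ≤ (c₂ : ℝ≥0∞) / ENNReal.ofReal δ *
                  (echoquet n δ Ω fun x => (f x).abs ^ (δ / n)) ^ ((n : ℝ) / δ) :=
  lebesgue_le_choquet_power_general n
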